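/- arXiv:1910.13795 — 3 statements merged into one kernel-verified Lean document; each statement's English description precedes it below -/
import Mathlib

section
/- Let Φ be an m×n complex matrix, b ∈ ℂ^m, and ς > 0. Suppose α* ∈ ℝ^n with α* ≥ 0 componentwise is a global minimizer of the function f(α) = ‖Φα − b‖² + ς‖α‖₁ over the nonnegative orthant {α ∈ ℝ^n : α ≥ 0}, and suppose α* ≠ 0. Then α* is also a global minimizer over the nonnegative orthant of g(α) = ‖Φα − b‖² + ς′‖α‖₁², where ς′ = ς/(2‖α*‖₁). (Proposition 1 of the paper.) -/
open Finset

/-- Squared Euclidean norm of a complex vector. -/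
noncomputable def sqNorm {m : ℕ} (v : Fin m → ℂ) : ℝ := ∑ i, Complex.normSq (v i)

/-- Proposition 1: a nonzero nonnegative global minimizer of the
`ℓ₁`-regularized NNLS objective `‖Φα − b‖² + ς‖α‖₁` over the nonnegative orthant
is also a global minimizer of the squared-`ℓ₁`-regularized objective
`‖Φα − b‖² + ς′‖α‖₁²` with `ς′ = ς / (2‖α*‖₁)`. -/
theorem stmt_0 {m n : ℕ} (Φ : Matrix (Fin m) (Fin n) ℂ) (b : Fin m → ℂ)
    (ς : ℝ) (hς : 0 < ς) (αs : Fin n → ℝ)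
    (hnn : ∀ i, 0 ≤ αs i) (hne : αs ≠ 0)
    (hmin : ∀ α : Fin n → ℝ, (∀ i, 0 ≤ α i) →
      sqNorm (Φ.mulVec (fun i => (αs i : ℂ)) - b) + ς * ∑ i, |αs i|
        ≤ sqNorm (Φ.mulVec (fun i => (α i : ℂ)) - b) + ς * ∑ i, |α i|) :
    ∀ α : Fin n → ℝ, (∀ i, 0 ≤ α i) →
      sqNorm (Φ.mulVec (fun i => (αs i : ℂ)) - b)
          + (ς / (2 * ∑ i, |αs i|)) * (∑ i, |αs i|) ^ 2
        ≤ sqNorm (Φ.mulVec (fun i => (α i : ℂ)) - b)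
          + (ς / (2 * ∑ i, |αs i|)) * (∑ i, |α i|) ^ 2 := by
  intro α hα
  set S : ℝ := ∑ i, |αs i| with hS
  set t : ℝ := ∑ i, |α i| with ht
  have hSpos : 0 < S := by
    obtain ⟨i, hi⟩ := Function.ne_iff.mp hne
    exact Finset.sum_pos' (fun j _ => abs_nonneg _)
      ⟨i, Finset.mem_univ i, abs_pos.mpr hi⟩
  have hkey := hmin α hα
  set F := sqNorm (Φ.mulVec (fun i => (α i : ℂ)) - b)
  set Fs := sqNorm (Φ.mulVec (fun i => (αs i : ℂ)) - b)
  have hc : ς / (2 * S) * (2 * S) = ς := by field_simp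
  nlinarith [sq_nonneg (t - S), mul_nonneg (div_nonneg hς.le (by linarith : (0:ℝ) ≤ 2 * S)) (sq_nonneg (t - S))]
end

section
/- Take G = 5 and p₀ = 2, so the dictionary D₂ ⊆ ℝ⁵ consists of e₁,…,e₅ together with the normalized width-2 pulses (e_i+e_{i+1})/√2 for i = 1,2,3,4. Then the vectors γ₃ = (1,1,1,1,0)ᵀ and γ₄ = (1,1,0,1,1)ᵀ have equal sparse-representation cost over D₂: the minimum of ‖α‖₁ over nonnegative α with Dα = γ₃ equals 2√2, and likewise the minimum for γ₄ equals 2√2. (This shows p₀ = 2 is ineffective at distinguishing group sizes larger than 2.) -/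
/-!
Every atom of `D₂` has coordinate sum at most `√2` (the pulses `(eᵢ + e_{i+1})/√2` attain it),
so any nonnegative representation `Dα = γ` has `∑ γ ≤ √2 ‖α‖₁`. Both `γ₃` and `γ₄` have coordinate
sum `4`, hence cost at least `4/√2 = 2√2`, and each is the sum of two width-2 pulses scaled by
`√2`, which attains that bound.
-/

open Finset

/-- `1/√2`, the height of a normalized width-2 discrete rectangular pulse. -/
noncomputable def s2 : ℝ := (Real.sqrt 2)⁻¹

/-- The dictionary matrix `D` for `G = 5`, `p₀ = 2`: its nine columns are
`e₁, …, e₅` and the normalized width-2 pulses `(eᵢ+e_{i+1})/√2`, `i = 1,…,4`. -/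
noncomputable def D52 : Matrix (Fin 5) (Fin 9) ℝ :=
  Matrix.of fun i j =>
    (![![1,0,0,0,0], ![0,1,0,0,0], ![0,0,1,0,0], ![0,0,0,1,0], ![0,0,0,0,1],
       ![s2,s2,0,0,0], ![0,s2,s2,0,0], ![0,0,s2,s2,0], ![0,0,0,s2,s2]]
      : Fin 9 → Fin 5 → ℝ) j i

open Matrix

def sparseReprCosts {m n : Type*} [Fintype n] (D : Matrix m n ℝ) (γ : m → ℝ) : Set ℝ :=
  {r | ∃ α : n → ℝ, (∀ j, 0 ≤ α j) ∧ D *ᵥ α = γ ∧ r = ∑ j, α j}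

section ColumnSumBound

variable {m n : Type*} [Fintype m] [Fintype n] {D : Matrix m n ℝ} {c : ℝ}

theorem sum_mulVec_le_of_sum_col_le (hD : ∀ j, ∑ i, D i j ≤ c) {α : n → ℝ}
    (hα : ∀ j, 0 ≤ α j) : ∑ i, (D *ᵥ α) i ≤ c * ∑ j, α j :=
  calc ∑ i, (D *ᵥ α) i = ∑ j, (∑ i, D i j) * α j := by
        simp only [mulVec, dotProduct, sum_mul]
        exact sum_comm
    _ ≤ ∑ j, c * α j := sum_le_sum fun j _ => mul_le_mul_of_nonneg_right (hD j) (hα j)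
    _ = c * ∑ j, α j := (mul_sum _ _ _).symm

theorem isLeast_sparseReprCosts_of_sum_col_le (hc : 0 < c) (hD : ∀ j, ∑ i, D i j ≤ c)
    {γ : m → ℝ} {α : n → ℝ} {v : ℝ} (hα : ∀ j, 0 ≤ α j) (hDα : D *ᵥ α = γ)
    (hαv : ∑ j, α j = v) (hγv : ∑ i, γ i = c * v) :
    IsLeast (sparseReprCosts D γ) v := by
  refine ⟨⟨α, hα, hDα, hαv.symm⟩, ?_⟩
  rintro r ⟨β, hβ, hDβ, rfl⟩
  have hbound := sum_mulVec_le_of_sum_col_le hD hβ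
  rw [hDβ, hγv] at hbound
  exact le_of_mul_le_mul_left hbound hc

end ColumnSumBound

lemma s2_mul_sqrt_two : s2 * Real.sqrt 2 = 1 :=
  inv_mul_cancel₀ (by positivity)

lemma s2_add_s2 : s2 + s2 = Real.sqrt 2 := by
  rw [s2, ← two_mul, ← div_eq_mul_inv, Real.div_sqrt]

lemma sum_col_D52_le (j : Fin 9) : ∑ i, D52 i j ≤ Real.sqrt 2 := by
  have hone : (1 : ℝ) ≤ Real.sqrt 2 := Real.one_le_sqrt.mpr (by norm_num)
  fin_cases j <;> simp [D52, Fin.sum_univ_five, s2_add_s2, hone]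

theorem isLeast_sparseReprCosts_D52 {γ : Fin 5 → ℝ} (hγ : ∑ i, γ i = 4) (k : Fin 9)
    (hk : D52 *ᵥ (Pi.single 5 (Real.sqrt 2) + Pi.single k (Real.sqrt 2)) = γ) :
    IsLeast (sparseReprCosts D52 γ) (2 * Real.sqrt 2) := by
  refine isLeast_sparseReprCosts_of_sum_col_le (by positivity) sum_col_D52_le
    (fun j => ?_) hk ?_ ?_
  · have hsingle : ∀ i : Fin 9, 0 ≤ (Pi.single i (Real.sqrt 2) : Fin 9 → ℝ) :=
      fun i => Pi.single_nonneg.mpr (Real.sqrt_nonneg 2)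
    exact add_nonneg (hsingle 5) (hsingle k) j
  · simp only [Pi.add_apply, sum_add_distrib, sum_pi_single', mem_univ, if_true]
    ring
  · rw [hγ, ← mul_assoc, mul_comm _ 2, mul_assoc, Real.mul_self_sqrt zero_le_two]
    norm_num

/-- Over the dictionary `D₂` (for `G = 5`, `p₀ = 2`), the vectors
`γ₃ = (1,1,1,1,0)ᵀ` and `γ₄ = (1,1,0,1,1)ᵀ` have equal sparse-representation cost `2√2`:
`p₀ = 2` cannot distinguish group sizes larger than `2`. -/
theorem stmt_12 :
    IsLeast {r : ℝ | ∃ α : Fin 9 → ℝ, (∀ j, 0 ≤ α j)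
        ∧ D52.mulVec α = ![1, 1, 1, 1, 0] ∧ r = ∑ j, α j} (2 * Real.sqrt 2)
    ∧ IsLeast {r : ℝ | ∃ α : Fin 9 → ℝ, (∀ j, 0 ≤ α j)
        ∧ D52.mulVec α = ![1, 1, 0, 1, 1] ∧ r = ∑ j, α j} (2 * Real.sqrt 2) := by
  constructor
  · refine isLeast_sparseReprCosts_D52 (by simp [Fin.sum_univ_five]; norm_num) 7 ?_
    ext i; fin_cases i <;> simp [D52, mulVec, dotProduct, Fin.sum_univ_succ, s2_mul_sqrt_two]
  · refine isLeast_sparseReprCosts_D52 (by simp [Fin.sum_univ_five]; norm_num) 8 ?_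
    ext i; fin_cases i <;> simp [D52, mulVec, dotProduct, Fin.sum_univ_succ, s2_mul_sqrt_two]
end

section
/- Take G = 5 and p₀ = 3, so the dictionary D₃ ⊆ ℝ⁵ consists of e₁,…,e₅, the normalized width-2 pulses (e_i+e_{i+1})/√2 for i = 1,…,4, and the normalized width-3 pulses (e_i+e_{i+1}+e_{i+2})/√3 for i = 1,2,3. Then the sparse-representation cost of γ₃ = (1,1,1,1,0)ᵀ over D₃ equals 1+√3 (attained by γ₃ = √3·(e₁+e₂+e₃)/√3 + 1·e₄), while the sparse-representation cost of γ₄ = (1,1,0,1,1)ᵀ over D₃ equals 2√2. Since 1+√3 < 2√2, the dictionary D₃ favors γ₃, which has better group-sparsity than γ₄. -/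
open Finset

/-- `1/√3`, the height of a normalized width-3 discrete rectangular pulse. -/
noncomputable def s3 : ℝ := (Real.sqrt 3)⁻¹

/-- The dictionary matrix `D` for `G = 5`, `p₀ = 3`: its twelve columns are
`e₁, …, e₅`, the normalized width-2 pulses `(eᵢ+e_{i+1})/√2` for `i = 1,…,4`, and the
normalized width-3 pulses `(eᵢ+e_{i+1}+e_{i+2})/√3` for `i = 1,2,3`. -/
noncomputable def D53 : Matrix (Fin 5) (Fin 12) ℝ :=
  Matrix.of fun i j =>
    (![![1,0,0,0,0], ![0,1,0,0,0], ![0,0,1,0,0], ![0,0,0,1,0], ![0,0,0,0,1],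
       ![s2,s2,0,0,0], ![0,s2,s2,0,0], ![0,0,s2,s2,0], ![0,0,0,s2,s2],
       ![s3,s3,s3,0,0], ![0,s3,s3,s3,0], ![0,0,s3,s3,s3]]
      : Fin 12 → Fin 5 → ℝ) j i

/-!
Both costs are values of the linear program `min ∑ α` over `α ≥ 0`, `D α = γ`, so each is
pinned down by a primal witness together with a dual certificate `y` satisfying `yᵀD ≤ 1` and
`y ⬝ γ = ∑ α` (weak duality). For `γ₃` the witness is `√3·(e₁+e₂+e₃)/√3 + e₄` with certificate
`(1, t, t, 1, 0)`, `t = (√3 - 1)/2`, whose feasibility against the pulse `(e₁+e₂)/√2` is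
exactly `1 + √3 ≤ 2√2`; for `γ₄` it is `√2·(e₁+e₂)/√2 + √2·(e₄+e₅)/√2` with
certificate `(1, 1, 0, 1, 1)/√2`.
-/

open Matrix

section Duality

variable {m n : Type*} [Fintype m] [Fintype n]

def representationCosts (D : Matrix m n ℝ) (γ : m → ℝ) : Set ℝ :=
  {r | ∃ α : n → ℝ, (∀ j, 0 ≤ α j) ∧ D *ᵥ α = γ ∧ r = ∑ j, α j}

theorem dotProduct_mulVec_le_sum {D : Matrix m n ℝ} {y : m → ℝ} (hy : ∀ j, (y ᵥ* D) j ≤ 1)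
    {α : n → ℝ} (hα : ∀ j, 0 ≤ α j) : y ⬝ᵥ (D *ᵥ α) ≤ ∑ j, α j := by
  rw [dotProduct_mulVec]
  exact Finset.sum_le_sum fun j _ => mul_le_of_le_one_left (hα j) (hy j)

theorem isLeast_representationCosts {D : Matrix m n ℝ} {γ : m → ℝ} {c : ℝ} {α₀ : n → ℝ}
    (hα₀ : ∀ j, 0 ≤ α₀ j) (hDα₀ : D *ᵥ α₀ = γ) (hα₀c : ∑ j, α₀ j = c)
    {y : m → ℝ} (hy : ∀ j, (y ᵥ* D) j ≤ 1) (hyγ : y ⬝ᵥ γ = c) :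
    IsLeast (representationCosts D γ) c := by
  refine ⟨⟨α₀, hα₀, hDα₀, hα₀c.symm⟩, ?_⟩
  rintro r ⟨α, hα, rfl, rfl⟩
  exact hyγ ▸ dotProduct_mulVec_le_sum hy hα

end Duality

theorem vecMul_D53 (y : Fin 5 → ℝ) :
    y ᵥ* D53 = ![y 0, y 1, y 2, y 3, y 4,
      s2 * (y 0 + y 1), s2 * (y 1 + y 2), s2 * (y 2 + y 3), s2 * (y 3 + y 4),
      s3 * (y 0 + y 1 + y 2), s3 * (y 1 + y 2 + y 3), s3 * (y 2 + y 3 + y 4)] := by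
  ext j
  fin_cases j <;> simp [D53, vecMul, dotProduct, Fin.sum_univ_five, mul_add, mul_comm]

theorem s2_mul_le_one {x : ℝ} (hx : x ≤ √2) : s2 * x ≤ 1 := by
  unfold s2; exact inv_mul_le_one_of_le₀ hx (Real.sqrt_nonneg 2)

theorem s3_mul_le_one {x : ℝ} (hx : x ≤ √3) : s3 * x ≤ 1 := by
  unfold s3; exact inv_mul_le_one_of_le₀ hx (Real.sqrt_nonneg 3)

theorem vecMul_D53_le_one {a b c d e : ℝ} (h₁ : a ≤ 1 ∧ b ≤ 1 ∧ c ≤ 1 ∧ d ≤ 1 ∧ e ≤ 1)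
    (h₂ : a + b ≤ √2 ∧ b + c ≤ √2 ∧ c + d ≤ √2 ∧ d + e ≤ √2)
    (h₃ : a + b + c ≤ √3 ∧ b + c + d ≤ √3 ∧ c + d + e ≤ √3) :
    ∀ j, (![a, b, c, d, e] ᵥ* D53) j ≤ 1 := by
  obtain ⟨ha, hb, hc, hd, he⟩ := h₁
  obtain ⟨hab, hbc, hcd, hde⟩ := h₂
  obtain ⟨habc, hbcd, hcde⟩ := h₃
  rw [vecMul_D53]
  intro j
  fin_cases j
  all_goals simp only [Fin.reduceFinMk, Fin.isValue, Matrix.cons_val]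
  exacts [ha, hb, hc, hd, he, s2_mul_le_one hab, s2_mul_le_one hbc, s2_mul_le_one hcd,
    s2_mul_le_one hde, s3_mul_le_one habc, s3_mul_le_one hbcd, s3_mul_le_one hcde]

theorem sqrt_two_gt : (1.41 : ℝ) < √2 := by
  rw [Real.lt_sqrt (by norm_num)]; norm_num

theorem sqrt_three_lt : √3 < (1.74 : ℝ) := by
  rw [Real.sqrt_lt' (by norm_num)]; norm_num

theorem one_add_sqrt_three_lt : 1 + √3 < 2 * √2 := by
  linarith [sqrt_two_gt, sqrt_three_lt]

theorem sqrt_two_lt_sqrt_three : √2 < √3 :=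
  Real.sqrt_lt_sqrt (by norm_num) (by norm_num)

theorem isLeast_representationCosts_γ₃ :
    IsLeast (representationCosts D53 ![1, 1, 1, 1, 0]) (1 + √3) := by
  have h₂ := sqrt_two_gt
  have h₃ := sqrt_three_lt
  have h₂₃ := sqrt_two_lt_sqrt_three
  refine isLeast_representationCosts (D := D53) (α₀ := ![0, 0, 0, 1, 0, 0, 0, 0, 0, √3, 0, 0])
    (y := ![1, (√3 - 1) / 2, (√3 - 1) / 2, 1, 0]) ?_ ?_ ?_ ?_ ?_
  · intro j; fin_cases j <;> simp
  · ext i; fin_cases i <;> simp [D53, mulVec, dotProduct, Fin.sum_univ_succ, s3]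
  · simp [Fin.sum_univ_succ]
  · refine vecMul_D53_le_one ⟨?_, ?_, ?_, ?_, ?_⟩ ⟨?_, ?_, ?_, ?_⟩ ⟨?_, ?_, ?_⟩ <;> linarith
  · simp only [cons_dotProduct_cons, dotProduct_of_isEmpty]
    ring

theorem isLeast_representationCosts_γ₄ :
    IsLeast (representationCosts D53 ![1, 1, 0, 1, 1]) (2 * √2) := by
  have h₂ := sqrt_two_gt
  have h₃ := sqrt_three_lt
  have h₂₃ := sqrt_two_lt_sqrt_three
  refine isLeast_representationCosts (D := D53) (α₀ := ![0, 0, 0, 0, 0, √2, 0, 0, √2, 0, 0, 0])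
    (y := ![√2 / 2, √2 / 2, 0, √2 / 2, √2 / 2]) ?_ ?_ ?_ ?_ ?_
  · intro j; fin_cases j <;> simp
  · ext i; fin_cases i <;> simp [D53, mulVec, dotProduct, Fin.sum_univ_succ, s2]
  · simp [Fin.sum_univ_succ, two_mul]
  · refine vecMul_D53_le_one ⟨?_, ?_, ?_, ?_, ?_⟩ ⟨?_, ?_, ?_, ?_⟩ ⟨?_, ?_, ?_⟩ <;> linarith
  · simp only [cons_dotProduct_cons, dotProduct_of_isEmpty]
    ring

/-- Over the dictionary `D₃` (for `G = 5`, `p₀ = 3`), the sparse-representation cost of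
`γ₃ = (1,1,1,1,0)ᵀ` equals `1 + √3` (attained by `√3·(e₁+e₂+e₃)/√3 + 1·e₄`), while the
cost of `γ₄ = (1,1,0,1,1)ᵀ` equals `2√2`; since `1 + √3 < 2√2`, the dictionary `D₃`
favors `γ₃`, which has better group-sparsity. -/
theorem stmt_13 :
    IsLeast {r : ℝ | ∃ α : Fin 12 → ℝ, (∀ j, 0 ≤ α j)
        ∧ D53.mulVec α = ![1, 1, 1, 1, 0] ∧ r = ∑ j, α j} (1 + Real.sqrt 3)
    ∧ IsLeast {r : ℝ | ∃ α : Fin 12 → ℝ, (∀ j, 0 ≤ α j)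
        ∧ D53.mulVec α = ![1, 1, 0, 1, 1] ∧ r = ∑ j, α j} (2 * Real.sqrt 2)
    ∧ 1 + Real.sqrt 3 < 2 * Real.sqrt 2 :=
  ⟨isLeast_representationCosts_γ₃, isLeast_representationCosts_γ₄, one_add_sqrt_three_lt⟩
end
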